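/- Every involution in S̃_n is of the form π^{-1} ∘ π for some π ∈ S̃_n, where ∘ is the Demazure product; consequently, for each z ∈ Ĩ_n the set A_Hecke(z) = {π ∈ S̃_n : π^{-1} ∘ π = z} is nonempty and finite. -/

import Mathlib

open scoped TensorProduct

/-- Membership in the affine symmetric group `S̃_n`, viewed inside `Equiv.Perm ℤ`. -/
def IsAffine (n : ℕ) (π : Equiv.Perm ℤ) : Prop :=
  (∀ i : ℤ, π (i + n) = π i + n) ∧
  (∑ i ∈ Finset.Icc (1 : ℤ) (n : ℤ), π i) = ∑ i ∈ Finset.Icc (1 : ℤ) (n : ℤ), i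

/-- The underlying function of the affine reflection `t_{ij}`. -/
def affTFun (n : ℕ) (i j k : ℤ) : ℤ :=
  if (k - i) % (n : ℤ) = 0 then k - i + j
  else if (k - j) % (n : ℤ) = 0 then k - j + i
  else k

theorem affTFun_involutive {n : ℕ} {i j : ℤ} (h : ¬ (j - i) % (n : ℤ) = 0) :
    Function.Involutive (affTFun n i j) := by
  have key : ∀ a : ℤ, a % (n : ℤ) = 0 ↔ (n : ℤ) ∣ a :=
    fun a => (@Int.dvd_iff_emod_eq_zero (n : ℤ) a).symm
  rw [key] at h
  intro k
  by_cases h1 : (n : ℤ) ∣ (k - i)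
  · have h2 : ¬ (n : ℤ) ∣ (k - i + j - i) := by
      intro hd
      apply h
      have h5 : j - i = (k - i + j - i) - (k - i) := by ring
      rw [h5]
      exact dvd_sub hd h1
    have h3 : (n : ℤ) ∣ (k - i + j - j) := by
      have h5 : k - i + j - j = k - i := by ring
      rw [h5]; exact h1
    have e1 : affTFun n i j k = k - i + j := by simp [affTFun, key, h1]
    have e2 : affTFun n i j (k - i + j) = k := by
      simp only [affTFun, key]
      rw [if_neg h2, if_pos h3]
      ring
    rw [e1, e2]
  · by_cases h2 : (n : ℤ) ∣ (k - j)
    · have h3 : (n : ℤ) ∣ (k - j + i - i) := by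
        have h5 : k - j + i - i = k - j := by ring
        rw [h5]; exact h2
      have e1 : affTFun n i j k = k - j + i := by simp [affTFun, key, h1, h2]
      have e2 : affTFun n i j (k - j + i) = k := by
        simp only [affTFun, key]
        rw [if_pos h3]
        ring
      rw [e1, e2]
    · have e1 : affTFun n i j k = k := by simp [affTFun, key, h1, h2]
      rw [e1, e1]

/-- The affine reflection `t_{ij}` (interpreted as the identity when `i ≡ j (mod n)`). -/
noncomputable def affT (n : ℕ) (i j : ℤ) : Equiv.Perm ℤ :=
  if h : (j - i) % (n : ℤ) = 0 then 1
  else Function.Involutive.toPerm _ (affTFun_involutive h)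

/-- The simple reflection `s_i = t_{i,i+1}` of `S̃_n`. -/
noncomputable def affS (n : ℕ) (i : ℤ) : Equiv.Perm ℤ := affT n i (i + 1)

/-- Coxeter length: minimal length of a word in the simple reflections `s_1, …, s_n`. -/
noncomputable def wordLength (n : ℕ) (π : Equiv.Perm ℤ) : ℕ :=
  sInf {l : ℕ | ∃ w : List ℤ,
    (∀ x ∈ w, 1 ≤ x ∧ x ≤ (n : ℤ)) ∧ (w.map (affS n)).prod = π ∧ w.length = l}

/-- The set of inversions of `π`, up to the diagonal translation relation. -/
def InvPair (π : Equiv.Perm ℤ) : Type :=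
  {p : ℤ × ℤ // p.1 < p.2 ∧ π p.2 < π p.1}

/-- The number of equivalence classes of inversions of `π` under
`(a,b) ~ (a + mn, b + mn)`. -/
noncomputable def invLength (n : ℕ) (π : Equiv.Perm ℤ) : ℕ :=
  Nat.card (Quot fun p q : InvPair π =>
    ∃ m : ℤ, q.1.1 = p.1.1 + m * n ∧ q.1.2 = p.1.2 + m * n)

/-- Entry `c_i` of the code of an affine permutation. -/
noncomputable def codeEntry (π : Equiv.Perm ℤ) (i : ℤ) : ℕ :=
  Nat.card {j : ℤ // i < j ∧ π j < π i}

/-- Entry `ĉ_i` of the involution code of an affine involution. -/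
noncomputable def icodeEntry (z : Equiv.Perm ℤ) (i : ℤ) : ℕ :=
  Nat.card {j : ℤ // i < j ∧ z j < z i ∧ z j ≤ i}

/-- `ℓ'(z)`: `n` minus the number of orbits of `z` acting on `ℤ/nℤ`. -/
noncomputable def lprime (n : ℕ) (z : Equiv.Perm ℤ) : ℕ :=
  n - Nat.card (Quot fun a b : ZMod n => ((z (a.val : ℤ) : ℤ) : ZMod n) = b)

/-- The characterizing properties of the Demazure (0-Hecke) product on `S̃_n`:
closure, associativity, `s_i ∘ s_i = s_i`, and agreement with the group product
on length-additive factorizations. -/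
def IsDemazure (n : ℕ) (D : Equiv.Perm ℤ → Equiv.Perm ℤ → Equiv.Perm ℤ) : Prop :=
  (∀ a b, IsAffine n a → IsAffine n b → IsAffine n (D a b)) ∧
  (∀ a b c, IsAffine n a → IsAffine n b → IsAffine n c →
    D (D a b) c = D a (D b c)) ∧
  (∀ i : ℤ, D (affS n i) (affS n i) = affS n i) ∧
  (∀ a b, IsAffine n a → IsAffine n b →
    wordLength n (a * b) = wordLength n a + wordLength n b → D a b = a * b)

/-- The set of Hecke atoms `{π : π⁻¹ ∘ π = z}`. -/
def AHecke (n : ℕ) (D : Equiv.Perm ℤ → Equiv.Perm ℤ → Equiv.Perm ℤ)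
    (z : Equiv.Perm ℤ) : Set (Equiv.Perm ℤ) :=
  {π | IsAffine n π ∧ D π⁻¹ π = z}

/-- The set of atoms: minimal-length Hecke atoms. -/
def DemAtoms (n : ℕ) (D : Equiv.Perm ℤ → Equiv.Perm ℤ → Equiv.Perm ℤ)
    (z : Equiv.Perm ℤ) : Set (Equiv.Perm ℤ) :=
  {π | π ∈ AHecke n D z ∧ ∀ σ ∈ AHecke n D z, wordLength n π ≤ wordLength n σ}

/-- The Bruhat covering relation on `S̃_n`. -/
def BruhatCov (n : ℕ) (a b : Equiv.Perm ℤ) : Prop :=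
  (∃ i j : ℤ, i < j ∧ (j - i) % (n : ℤ) ≠ 0 ∧ b = a * affT n i j) ∧
  wordLength n b = wordLength n a + 1

/-- The Bruhat order on `S̃_n`. -/
def BruhatLE (n : ℕ) : Equiv.Perm ℤ → Equiv.Perm ℤ → Prop :=
  Relation.ReflTransGen (BruhatCov n)

/-- The covering relation of the Bruhat order restricted to involutions in `S̃_n`. -/
def BruhatCovI (n : ℕ) (y z : Equiv.Perm ℤ) : Prop :=
  IsAffine n y ∧ IsAffine n z ∧ y⁻¹ = y ∧ z⁻¹ = z ∧
  BruhatLE n y z ∧ y ≠ z ∧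
  ∀ w : Equiv.Perm ℤ, IsAffine n w → w⁻¹ = w →
    BruhatLE n y w → BruhatLE n w z → w = y ∨ w = z

/-- Strict dominance order on partitions (written as weakly decreasing functions). -/
def DomLT (p q : ℕ → ℕ) : Prop :=
  p ≠ q ∧ ∀ k : ℕ, ∑ i ∈ Finset.range k, p i ≤ ∑ i ∈ Finset.range k, q i

/-- The shape `λ(π)`: the transpose of the partition sorting the code of `π⁻¹`,
recorded as the weakly decreasing function `k ↦ λ(π)_{k+1}`. -/
noncomputable def affShape (n : ℕ) (π : Equiv.Perm ℤ) : ℕ → ℕ :=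
  fun k => Multiset.countP (fun x => k < x)
    ((Finset.Icc (1 : ℤ) (n : ℤ)).val.map (codeEntry π⁻¹))

/-- The shape `μ(z)`: the transpose of the partition sorting the involution code of `z`,
recorded as the weakly decreasing function `k ↦ μ(z)_{k+1}`. -/
noncomputable def invShape (n : ℕ) (z : Equiv.Perm ℤ) : ℕ → ℕ :=
  fun k => Multiset.countP (fun x => k < x)
    ((Finset.Icc (1 : ℤ) (n : ℤ)).val.map (icodeEntry z))

/-- The weakly decreasing rearrangement of a multiset of naturals, padded by zeros. -/
noncomputable def rearr (s : Multiset ℕ) : ℕ → ℕ :=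
  fun k => ((s.sort (· ≤ ·)).reverse).getD k 0

/-- Remove the entries of a list of integers that repeat an earlier residue mod `n`. -/
def dedupMod (n : ℕ) : List ℤ → List ℤ
  | [] => []
  | x :: xs => x :: dedupMod n (xs.filter fun y => (y - x) % (n : ℤ) ≠ 0)
termination_by l => l.length
decreasing_by
  simp only [List.length_cons]
  first
    | exact Nat.lt_succ_of_le ((le_of_eq (List.length_unattach ..)).trans
        ((List.length_filter_le _ _).trans (le_of_eq (List.length_attach ..))))
    | (simp only [List.length_unattach, List.length_attach]
       exact Nat.lt_succ_of_le (List.length_filter_le _ _))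
    | (simp; omega)

/-- The window `[[z(a₁), a₁, z(a₂), a₂, …]]` of `α_min(z)⁻¹`, where `a₁ < a₂ < ⋯`
are the elements `a ∈ [n]` with `a ≤ z(a)`. -/
noncomputable def aminWindow (n : ℕ) (z : Equiv.Perm ℤ) : List ℤ :=
  dedupMod n
    ((((Finset.Icc (1 : ℤ) (n : ℤ)).sort (· ≤ ·)).filter fun a => a ≤ z a).flatMap
      fun a => [z a, a])

/-- Cyclically decreasing elements of `S̃_n`. -/
def IsCycDec (n : ℕ) (π : Equiv.Perm ℤ) : Prop :=
  ∃ w : List ℤ,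
    (∀ x ∈ w, 1 ≤ x ∧ x ≤ (n : ℤ)) ∧ (w.map (affS n)).prod = π ∧
    w.length = wordLength n π ∧
    w.Pairwise fun a b => (a + 1 - b) % (n : ℤ) ≠ 0

/-- The coefficient of the monomial `∏ₖ xₖ₊₁^(α k)` in Lam's affine Stanley symmetric
function `F_π`: the number of length-additive factorizations of `π` into cyclically
decreasing factors of lengths prescribed by `α`. -/
noncomputable def stanleyCoeff (n : ℕ) (π : Equiv.Perm ℤ) (α : ℕ →₀ ℕ) : ℕ :=
  Nat.card {f : ℕ → Equiv.Perm ℤ //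
    (∀ k, IsCycDec n (f k)) ∧ (∀ k, wordLength n (f k) = α k) ∧
    (∑ k ∈ α.support, α k) = wordLength n π ∧
    ∃ N : ℕ, (∀ k, N ≤ k → f k = 1) ∧ ((List.range N).map f).prod = π}

/-- The set `Φ⁻_r(y)` of Bruhat covers of `y` of the form `τⁿ_{i r}(y)` with `i < r`
and `i ∉ {r, y(r)} + nℤ`. -/
def PhiMinus (n : ℕ) (τ : ℤ → ℤ → Equiv.Perm ℤ → Equiv.Perm ℤ)
    (y : Equiv.Perm ℤ) (r : ℤ) : Set (Equiv.Perm ℤ) :=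
  {z | BruhatCovI n y z ∧ ∃ i : ℤ, i < r ∧ (i - r) % (n : ℤ) ≠ 0 ∧
    (i - y r) % (n : ℤ) ≠ 0 ∧ z = τ i r y}

/-- The set `Φ⁺_r(y)` of Bruhat covers of `y` of the form `τⁿ_{r j}(y)` with `r < j`
and `j ∉ {r, y(r)} + nℤ`. -/
def PhiPlus (n : ℕ) (τ : ℤ → ℤ → Equiv.Perm ℤ → Equiv.Perm ℤ)
    (y : Equiv.Perm ℤ) (r : ℤ) : Set (Equiv.Perm ℤ) :=
  {z | BruhatCovI n y z ∧ ∃ j : ℤ, r < j ∧ (j - r) % (n : ℤ) ≠ 0 ∧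
    (j - y r) % (n : ℤ) ≠ 0 ∧ z = τ r j y}

/-- The affine symmetric group as a subtype of `Equiv.Perm ℤ`. -/
abbrev AffPerm (n : ℕ) := {π : Equiv.Perm ℤ // IsAffine n π}

/-- The coproduct `Δ(π) = Σ_{π ≐ π'π''} π' ⊗ π''` on `ℚ S̃_n`. -/
noncomputable def affComul (n : ℕ) :
    (AffPerm n →₀ ℚ) →ₗ[ℚ] TensorProduct ℚ (AffPerm n →₀ ℚ) (AffPerm n →₀ ℚ) :=
  Finsupp.lift _ ℚ _ fun π : AffPerm n =>
    ∑ᶠ p ∈ {p : AffPerm n × AffPerm n |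
        p.1.val * p.2.val = π.val ∧
        wordLength n π.val = wordLength n p.1.val + wordLength n p.2.val},
      (Finsupp.single p.1 (1 : ℚ)) ⊗ₜ[ℚ] (Finsupp.single p.2 (1 : ℚ))


/-!
The length is computed by the code: `ℓ(π) = ∑_{a=1}^{n} #{j > a | π j < π a}`, and right
multiplication by `s_i` changes this sum by exactly `±1`, according as `π i < π (i + 1)` or not.
Hence `a ∘ s_i` is `a s_i` or `a`, `(a ∘ s_i)⁻¹ = s_i ∘ a⁻¹`, and `ℓ(a) ≤ ℓ(a ∘ b)`.

If `z ≠ 1` is an involution with right descent `s = s_i`, then `y = z s` (when `z s = s z`)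
or `y = s z s` is a shorter involution with `s ∘ y ∘ s = z`. By induction `y = π⁻¹ ∘ π`, and
then `z = (π ∘ s)⁻¹ ∘ (π ∘ s)`. Finiteness: `ℓ(π) = ℓ(π⁻¹) ≤ ℓ(π⁻¹ ∘ π) = ℓ(z)`, and only
finitely many elements have bounded length.
-/

open Equiv Finset

variable {n : ℕ}

theorem affT_mul_self (n : ℕ) (i j : ℤ) : affT n i j * affT n i j = 1 := by
  unfold affT
  split_ifs with h
  · exact mul_one 1
  · ext k
    exact affTFun_involutive h k

theorem affS_mul_self (n : ℕ) (i : ℤ) : affS n i * affS n i = 1 :=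
  affT_mul_self n i (i + 1)

theorem affS_inv (n : ℕ) (i : ℤ) : (affS n i)⁻¹ = affS n i :=
  inv_eq_of_mul_eq_one_right (affS_mul_self n i)

theorem mul_affS_mul_affS (π : Perm ℤ) (i : ℤ) : π * affS n i * affS n i = π := by
  rw [mul_assoc, affS_mul_self, mul_one]

theorem affS_mul_affS_mul (π : Perm ℤ) (i : ℤ) : affS n i * (affS n i * π) = π := by
  rw [← mul_assoc, affS_mul_self, one_mul]

theorem affS_affS_apply (n : ℕ) (i k : ℤ) : affS n i (affS n i k) = k := by
  rw [← Perm.mul_apply, affS_mul_self, Perm.one_apply]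

theorem affS_mul_eq_inv (π : Perm ℤ) (i : ℤ) : affS n i * π = (π⁻¹ * affS n i)⁻¹ := by
  rw [mul_inv_rev, affS_inv, inv_inv]

theorem not_dvd_sub_of_dvd_sub_succ (hn : 2 ≤ n) {i k : ℤ} (h : (n : ℤ) ∣ k - (i + 1)) :
    ¬ (n : ℤ) ∣ k - i := fun h' => by
  have := Int.le_of_dvd one_pos (by simpa using dvd_sub h' h)
  omega

theorem affS_apply (hn : 2 ≤ n) (i k : ℤ) :
    affS n i k =
      if (n : ℤ) ∣ k - i then k + 1 else if (n : ℤ) ∣ k - (i + 1) then k - 1 else k := by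
  have h1 : ¬ (i + 1 - i) % (n : ℤ) = 0 := by
    rw [add_sub_cancel_left, ← Int.dvd_iff_emod_eq_zero]
    intro h
    have := Int.le_of_dvd one_pos h
    omega
  rw [affS, affT, dif_neg h1]
  change affTFun n i (i + 1) k = _
  simp only [affTFun, ← Int.dvd_iff_emod_eq_zero]
  split_ifs <;> ring

theorem affS_apply_of_dvd (hn : 2 ≤ n) {i k : ℤ} (h : (n : ℤ) ∣ k - i) :
    affS n i k = k + 1 := by
  rw [affS_apply hn, if_pos h]

theorem affS_apply_of_dvd_succ (hn : 2 ≤ n) {i k : ℤ} (h : (n : ℤ) ∣ k - (i + 1)) :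
    affS n i k = k - 1 := by
  rw [affS_apply hn, if_neg (not_dvd_sub_of_dvd_sub_succ hn h), if_pos h]

theorem affS_apply_of_not_dvd (hn : 2 ≤ n) {i k : ℤ} (h₁ : ¬ (n : ℤ) ∣ k - i)
    (h₂ : ¬ (n : ℤ) ∣ k - (i + 1)) : affS n i k = k := by
  rw [affS_apply hn, if_neg h₁, if_neg h₂]

theorem affS_apply_le (hn : 2 ≤ n) (i k : ℤ) : affS n i k ≤ k + 1 := by
  rw [affS_apply hn]
  split_ifs <;> omega

theorem sub_one_le_affS_apply (hn : 2 ≤ n) (i k : ℤ) : k - 1 ≤ affS n i k := by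
  rw [affS_apply hn]
  split_ifs <;> omega

theorem dvd_sub_of_affS_apply_eq (hn : 2 ≤ n) {i k : ℤ} (h : affS n i k = k + 1) :
    (n : ℤ) ∣ k - i := by
  rw [affS_apply hn] at h
  split_ifs at h with h₁ <;> first | exact h₁ | omega

theorem affS_lt_affS (hn : 2 ≤ n) (i : ℤ) {a b : ℤ} (hab : a < b)
    (hswap : ¬ ((n : ℤ) ∣ a - i ∧ b = a + 1)) : affS n i a < affS n i b := by
  by_contra hle
  have hne : affS n i a ≠ affS n i b := fun h => hab.ne ((affS n i).injective h)
  have h₁ := affS_apply_le hn i a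
  have h₂ := sub_one_le_affS_apply hn i b
  have hb : b = a + 1 := by omega
  exact hswap ⟨dvd_sub_of_affS_apply_eq hn (by omega), hb⟩

theorem mul_affS_apply_self (hn : 2 ≤ n) (π : Perm ℤ) (i : ℤ) :
    (π * affS n i) i = π (i + 1) := by
  rw [Perm.mul_apply, affS_apply_of_dvd hn (by simp)]

theorem mul_affS_apply_succ (hn : 2 ≤ n) (π : Perm ℤ) (i : ℤ) :
    (π * affS n i) (i + 1) = π i := by
  rw [Perm.mul_apply, affS_apply_of_dvd_succ hn (by simp), add_sub_cancel_right]

def IsPeriodic (n : ℕ) (π : Perm ℤ) : Prop := ∀ i : ℤ, π (i + n) = π i + n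

namespace IsPeriodic

variable {π σ : Perm ℤ}

theorem mul (hπ : IsPeriodic n π) (hσ : IsPeriodic n σ) : IsPeriodic n (π * σ) := fun k => by
  simp only [Perm.mul_apply, hσ k, hπ (σ k)]

theorem inv (hπ : IsPeriodic n π) : IsPeriodic n π⁻¹ := fun k =>
  π.injective <| by rw [hπ]; simp only [Perm.coe_inv, apply_symm_apply]

theorem apply_add_mul (hπ : IsPeriodic n π) (k t : ℤ) : π (k + t * n) = π k + t * n := by
  induction t using Int.induction_on with
  | zero => simp
  | succ m ih =>
    rw [show k + (m + 1) * n = k + m * n + n by ring, hπ, ih]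
    ring
  | pred m ih =>
    have := hπ (k + (-m - 1) * n)
    rw [show k + (-m - 1) * n + n = k + -m * n by ring, ih] at this
    linarith

theorem apply_of_dvd (hπ : IsPeriodic n π) {a b : ℤ} (h : (n : ℤ) ∣ a - b) :
    π a = π b + (a - b) := by
  obtain ⟨t, ht⟩ := h
  rw [show a = b + t * n by linear_combination ht, hπ.apply_add_mul]
  ring

theorem dvd_apply_sub (hπ : IsPeriodic n π) {a b : ℤ} (h : (n : ℤ) ∣ a - b) :
    (n : ℤ) ∣ π a - π b := by
  rwa [hπ.apply_of_dvd h, add_sub_cancel_left]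

end IsPeriodic

theorem isPeriodic_affS (hn : 2 ≤ n) (i : ℤ) : IsPeriodic n (affS n i) := fun k => by
  have hshift : ∀ c, (n : ℤ) ∣ k + n - c ↔ (n : ℤ) ∣ k - c := fun c => by
    rw [add_sub_right_comm, dvd_add_self_right]
  simp only [affS_apply hn, hshift]
  split_ifs <;> ring

def windowRep (n : ℕ) (a : ℤ) : ℤ := (a - 1) % (n : ℤ) + 1

theorem windowRep_mem (hn : 0 < n) (a : ℤ) : windowRep n a ∈ Icc (1 : ℤ) n := by
  have := Int.emod_nonneg (a - 1) (by omega : (n : ℤ) ≠ 0)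
  have := Int.emod_lt_of_pos (a - 1) (by omega : (0 : ℤ) < n)
  simp only [mem_Icc, windowRep]
  omega

theorem dvd_windowRep_sub (n : ℕ) (a : ℤ) : (n : ℤ) ∣ windowRep n a - a := by
  rw [windowRep, ← sub_sub_sub_cancel_right _ a 1, add_sub_cancel_right]
  exact Int.dvd_emod_sub_self

theorem windowRep_of_mem {a : ℤ} (ha : a ∈ Icc (1 : ℤ) n) : windowRep n a = a := by
  rw [mem_Icc] at ha
  rw [windowRep, Int.emod_eq_of_lt (by omega) (by omega), sub_add_cancel]

theorem windowRep_eq_of_dvd {a b : ℤ} (h : (n : ℤ) ∣ a - b) : windowRep n a = windowRep n b := by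
  have : a - 1 ≡ b - 1 [ZMOD n] :=
    (Int.modEq_iff_dvd.mpr (by rwa [sub_sub_sub_cancel_right])).symm
  rw [windowRep, windowRep, this.eq]

theorem eq_of_mem_Icc_of_dvd {a b : ℤ} (ha : a ∈ Icc (1 : ℤ) n) (hb : b ∈ Icc (1 : ℤ) n)
    (h : (n : ℤ) ∣ a - b) : a = b := by
  rw [← windowRep_of_mem ha, ← windowRep_of_mem hb, windowRep_eq_of_dvd h]

theorem sum_windowRep_apply (hn : 0 < n) {ρ : Perm ℤ} (hρ : IsPeriodic n ρ)
    {M : Type*} [AddCommMonoid M] (f : ℤ → M) :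
    ∑ k ∈ Icc (1 : ℤ) n, f (windowRep n (ρ k)) = ∑ k ∈ Icc (1 : ℤ) n, f k := by
  have hback : ∀ {σ τ : Perm ℤ}, IsPeriodic n σ → τ * σ = 1 → ∀ a ∈ Icc (1 : ℤ) n,
      windowRep n (τ (windowRep n (σ a))) = a := fun {σ τ} hσ hτσ a ha => by
    have h := hσ.inv.dvd_apply_sub (dvd_windowRep_sub n (σ a))
    rw [inv_eq_of_mul_eq_one_left hτσ] at h
    rw [windowRep_eq_of_dvd h, ← Perm.mul_apply, hτσ, Perm.one_apply, windowRep_of_mem ha]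
  exact sum_nbij' (fun k => windowRep n (ρ k)) (fun k => windowRep n (ρ⁻¹ k))
    (fun _ _ => windowRep_mem hn _) (fun _ _ => windowRep_mem hn _)
    (hback hρ (inv_mul_cancel ρ)) (hback hρ.inv (mul_inv_cancel ρ))
    (fun _ _ => rfl)

theorem sum_apply_apply (hn : 0 < n) {π ρ : Perm ℤ} (hπ : IsPeriodic n π)
    (hρ : IsPeriodic n ρ) :
    ∑ k ∈ Icc (1 : ℤ) n, π (ρ k) =
      ∑ k ∈ Icc (1 : ℤ) n, π k + (∑ k ∈ Icc (1 : ℤ) n, ρ k - ∑ k ∈ Icc (1 : ℤ) n, k) := by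
  have hpt : ∀ k, π (ρ k) = π (windowRep n (ρ k)) + (ρ k - windowRep n (ρ k)) := fun k =>
    hπ.apply_of_dvd (dvd_sub_comm.mp (dvd_windowRep_sub n (ρ k)))
  have hid := sum_windowRep_apply hn hρ id
  simp only [id] at hid
  simp only [hpt, sum_add_distrib, sum_sub_distrib, sum_windowRep_apply hn hρ π, hid]

theorem isAffine_one (n : ℕ) : IsAffine n 1 := ⟨fun _ => rfl, rfl⟩

namespace IsAffine

variable {π σ : Perm ℤ}

theorem isPeriodic (hπ : IsAffine n π) : IsPeriodic n π := hπ.1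

theorem mul (hn : 0 < n) (hπ : IsAffine n π) (hσ : IsAffine n σ) : IsAffine n (π * σ) :=
  ⟨hπ.isPeriodic.mul hσ.isPeriodic, by
    simp only [Perm.mul_apply, sum_apply_apply hn hπ.isPeriodic hσ.isPeriodic, hπ.2, hσ.2,
      sub_self, add_zero]⟩

theorem inv (hn : 0 < n) (hπ : IsAffine n π) : IsAffine n π⁻¹ := by
  refine ⟨hπ.isPeriodic.inv, ?_⟩
  have h := sum_apply_apply hn hπ.isPeriodic hπ.isPeriodic.inv
  simp only [← Perm.mul_apply, mul_inv_cancel, Perm.one_apply, hπ.2] at h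
  linarith

end IsAffine

theorem card_filter_dvd_sub (hn : 0 < n) (c : ℤ) :
    #{k ∈ Icc (1 : ℤ) n | (n : ℤ) ∣ k - c} = 1 := by
  rw [card_eq_one]
  refine ⟨windowRep n c, Finset.ext fun k => ⟨fun hk => ?_, fun hk => ?_⟩⟩
  · rw [mem_filter] at hk
    rw [mem_singleton, ← windowRep_of_mem hk.1]
    exact windowRep_eq_of_dvd hk.2
  · rw [mem_singleton] at hk
    subst hk
    exact mem_filter.mpr ⟨windowRep_mem hn c, dvd_windowRep_sub n c⟩

theorem isAffine_affS (hn : 2 ≤ n) (i : ℤ) : IsAffine n (affS n i) := by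
  refine ⟨isPeriodic_affS hn i, ?_⟩
  have hpt : ∀ k, affS n i k = k + ((if (n : ℤ) ∣ k - i then 1 else 0) -
      (if (n : ℤ) ∣ k - (i + 1) then 1 else 0)) := fun k => by
    rw [affS_apply hn]
    split_ifs with h₁ h₂ <;> first | exact absurd h₁ (not_dvd_sub_of_dvd_sub_succ hn h₂) | ring
  simp only [hpt, sum_add_distrib, sum_sub_distrib, sum_boole,
    card_filter_dvd_sub (by omega : 0 < n), sub_self, add_zero]

theorem IsPeriodic.apply_succ_lt_of_dvd {π : Perm ℤ} (hπ : IsPeriodic n π) {i k : ℤ}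
    (hd : π (i + 1) < π i) (hk : (n : ℤ) ∣ k - i) : π (k + 1) < π k := by
  have hk' : (n : ℤ) ∣ k + 1 - (i + 1) := by rwa [add_sub_add_right_eq_sub]
  rw [hπ.apply_of_dvd hk, hπ.apply_of_dvd hk']
  linarith

theorem codeEntry_eq_ncard (π : Perm ℤ) (a : ℤ) :
    codeEntry π a = {j : ℤ | a < j ∧ π j < π a}.ncard :=
  (Nat.card_coe_set_eq _).symm

theorem IsPeriodic.finite_setOf_lt_apply_lt (hn : 0 < n) {π : Perm ℤ} (hπ : IsPeriodic n π)
    (a : ℤ) : {j : ℤ | a < j ∧ π j < π a}.Finite := by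
  obtain ⟨m, hm⟩ := (Set.finite_Icc (1 : ℤ) n).image π |>.bddBelow
  refine (Set.finite_Ioo a (π a - m + n)).subset fun j ⟨hj, hπj⟩ => ⟨hj, ?_⟩
  have hw := windowRep_mem hn j
  have hmj : m ≤ π (windowRep n j) := hm ⟨_, by simpa using hw, rfl⟩
  have := hπ.apply_of_dvd (dvd_sub_comm.mp (dvd_windowRep_sub n j))
  rw [mem_Icc] at hw
  linarith

theorem IsPeriodic.codeEntry_add_mul {π : Perm ℤ} (hπ : IsPeriodic n π) (a t : ℤ) :
    codeEntry π (a + t * n) = codeEntry π a :=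
  Nat.card_congr <| ((Equiv.addRight (t * n)).subtypeEquiv fun j => by
    simp only [coe_addRight, hπ.apply_add_mul, add_lt_add_iff_right]).symm

theorem IsPeriodic.codeEntry_windowRep {π : Perm ℤ} (hπ : IsPeriodic n π) (a : ℤ) :
    codeEntry π (windowRep n a) = codeEntry π a := by
  obtain ⟨t, ht⟩ := dvd_windowRep_sub n a
  rw [show windowRep n a = a + t * n by linarith, hπ.codeEntry_add_mul]

noncomputable def codeSum (n : ℕ) (π : Perm ℤ) : ℕ := ∑ a ∈ Icc (1 : ℤ) n, codeEntry π a

theorem codeSum_one (n : ℕ) : codeSum n 1 = 0 :=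
  sum_eq_zero fun _ _ => Nat.card_eq_zero.mpr (Or.inl ⟨fun ⟨_, h₁, h₂⟩ => h₁.not_gt h₂⟩)

section Descent

variable {π : Perm ℤ} {i : ℤ}

theorem IsPeriodic.codeEntry_mul_affS (hn : 2 ≤ n) (hπ : IsPeriodic n π)
    (hd : π (i + 1) < π i) {a : ℤ} (ha : ¬ (n : ℤ) ∣ a - (i + 1)) :
    codeEntry (π * affS n i) a = codeEntry π (affS n i a) := by
  refine Nat.card_congr ((affS n i).subtypeEquiv fun j => ?_)
  simp only [Perm.mul_apply]
  refine and_congr_left fun hπj => ⟨fun hj => affS_lt_affS hn i hj ?_, fun hj => ?_⟩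
  · rintro ⟨hai, rfl⟩
    rw [affS_apply_of_dvd hn hai, affS_apply_of_dvd_succ hn (by rwa [add_sub_add_right_eq_sub]),
      add_sub_cancel_right] at hπj
    exact (hπ.apply_succ_lt_of_dvd hd hai).not_gt hπj
  · have hsa : ¬ (n : ℤ) ∣ affS n i a - i := fun h => ha <| by
      simpa only [affS_affS_apply, affS_apply_of_dvd hn (sub_self i ▸ dvd_zero _)] using
        (isPeriodic_affS hn i).dvd_apply_sub h
    simpa only [affS_affS_apply] using affS_lt_affS hn i hj (fun h => hsa h.1)

theorem IsPeriodic.codeEntry_mul_affS_add_one (hn : 2 ≤ n) (hπ : IsPeriodic n π)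
    (hd : π (i + 1) < π i) {a : ℤ} (ha : (n : ℤ) ∣ a - (i + 1)) :
    codeEntry (π * affS n i) a + 1 = codeEntry π (affS n i a) := by
  have hsa : affS n i a = a - 1 := affS_apply_of_dvd_succ hn ha
  have hsa' : affS n i (a - 1) = a := by rw [← hsa, affS_affS_apply]
  set T := {j : ℤ | a - 1 < j ∧ π j < π (a - 1)}
  have haT : a ∈ T := ⟨sub_one_lt a, by
    simpa using hπ.apply_succ_lt_of_dvd hd (k := a - 1) (by convert ha using 1; ring)⟩
  -- `s_i` maps the inversions of `π s_i` at `a` onto those of `π` at `a - 1`, except `(a - 1, a)`.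
  have hcard : codeEntry (π * affS n i) a = (T \ {a}).ncard := by
    rw [← Nat.card_coe_set_eq]
    refine Nat.card_congr ((affS n i).subtypeEquiv fun j => ?_)
    have h₁ := affS_apply_le hn i j
    have h₂ := sub_one_le_affS_apply hn i j
    have h₃ : affS n i j = a ↔ j = a - 1 := (affS n i).injective.eq_iff' hsa'
    have h₄ : j = a → affS n i j = a - 1 := fun h => h ▸ hsa
    simp only [Perm.mul_apply, hsa, Set.mem_sdiff, Set.mem_ofPred_eq, Set.mem_singleton_iff, T]
    constructor
    · rintro ⟨hj, hπj⟩
      exact ⟨⟨by omega, hπj⟩, fun h => by have := h₃.mp h; omega⟩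
    · rintro ⟨⟨hj, hπj⟩, hja⟩
      have := mt h₃.mpr hja
      exact ⟨by omega, hπj⟩
  rw [hcard, hsa, codeEntry_eq_ncard]
  exact Set.ncard_sdiff_singleton_add_one haT (hπ.finite_setOf_lt_apply_lt (by omega) _)

theorem IsPeriodic.codeSum_mul_affS_add_one (hn : 2 ≤ n) (hπ : IsPeriodic n π)
    (hd : π (i + 1) < π i) : codeSum n (π * affS n i) + 1 = codeSum n π := by
  have hn₀ : 0 < n := by omega
  set a₀ := windowRep n (i + 1)
  have ha₀ : (n : ℤ) ∣ a₀ - (i + 1) := dvd_windowRep_sub n _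
  have hpt : ∀ a ∈ Icc (1 : ℤ) n, codeEntry (π * affS n i) a + (if a = a₀ then 1 else 0) =
      codeEntry π (windowRep n (affS n i a)) := fun a ha => by
    rw [hπ.codeEntry_windowRep]
    split_ifs with h
    · exact h ▸ hπ.codeEntry_mul_affS_add_one hn hd ha₀
    · refine hπ.codeEntry_mul_affS hn hd fun hdvd => h ?_
      exact eq_of_mem_Icc_of_dvd ha (windowRep_mem hn₀ _) (by
        simpa using dvd_sub hdvd ha₀)
  have := sum_congr rfl hpt
  rwa [sum_add_distrib, sum_ite_eq', if_pos (windowRep_mem hn₀ _),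
    sum_windowRep_apply hn₀ (isPeriodic_affS hn i)] at this

theorem IsPeriodic.codeSum_mul_affS (hn : 2 ≤ n) (hπ : IsPeriodic n π)
    (ha : π i < π (i + 1)) : codeSum n (π * affS n i) = codeSum n π + 1 := by
  have hd : (π * affS n i) (i + 1) < (π * affS n i) i := by
    rwa [mul_affS_apply_succ hn, mul_affS_apply_self hn]
  have := (hπ.mul (isPeriodic_affS hn i)).codeSum_mul_affS_add_one hn hd
  rwa [mul_affS_mul_affS, eq_comm] at this

end Descent

theorem IsAffine.eq_one_of_strictMono (hn : 0 < n) {π : Perm ℤ} (hπ : IsAffine n π)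
    (hmono : StrictMono π) : π = 1 := by
  set e := hmono.orderIsoOfSurjective π π.surjective
  have hstep : IsPeriodic 1 π := fun k => by
    simpa only [Nat.cast_one, Order.succ_eq_add_one, e, StrictMono.coe_orderIsoOfSurjective]
      using e.map_succ k
  have hshift : ∀ k, π k = k + π 0 := fun k => by
    simpa [add_comm] using hstep.apply_add_mul 0 k
  have hsum := hπ.2
  rw [sum_congr rfl fun k _ => hshift k, sum_add_distrib, add_eq_left, sum_const,
    smul_eq_zero] at hsum
  have h₀ : π 0 = 0 := hsum.resolve_left (by simp; omega)
  ext k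
  rw [hshift k, h₀, add_zero, Perm.one_apply]

theorem IsAffine.exists_descent (hn : 0 < n) {π : Perm ℤ} (hπ : IsAffine n π) (hne : π ≠ 1) :
    ∃ i ∈ Icc (1 : ℤ) n, π (i + 1) < π i := by
  by_contra! hasc
  refine hne (hπ.eq_one_of_strictMono hn (strictMono_int_of_lt_succ fun k => ?_))
  have hk := hπ.isPeriodic.apply_of_dvd (dvd_sub_comm.mp (dvd_windowRep_sub n k))
  have hk' := hπ.isPeriodic.apply_of_dvd (a := k + 1) (b := windowRep n k + 1)
    (by rw [add_sub_add_right_eq_sub]; exact dvd_sub_comm.mp (dvd_windowRep_sub n k))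
  have hle := hasc _ (windowRep_mem hn k)
  have hne' : π (windowRep n k) ≠ π (windowRep n k + 1) := π.injective.ne (by omega)
  omega

theorem IsPeriodic.two_le_of_descent (hn : 0 < n) {π : Perm ℤ} (hπ : IsPeriodic n π) {i : ℤ}
    (hd : π (i + 1) < π i) : 2 ≤ n := by
  by_contra! h
  obtain rfl : n = 1 := by omega
  have := hπ i
  simp only [Nat.cast_one] at this
  omega

theorem IsPeriodic.codeSum_mul_affS_le (hn : 2 ≤ n) {π : Perm ℤ} (hπ : IsPeriodic n π)
    (i : ℤ) : codeSum n (π * affS n i) ≤ codeSum n π + 1 := by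
  rcases lt_or_gt_of_ne (π.injective.ne (lt_add_one i).ne) with h | h
  · exact (hπ.codeSum_mul_affS hn h).le
  · have := hπ.codeSum_mul_affS_add_one hn h
    omega

def IsWord (n : ℕ) (w : List ℤ) : Prop := ∀ x ∈ w, 1 ≤ x ∧ x ≤ (n : ℤ)

theorem wordLength_le {w : List ℤ} (hw : IsWord n w) :
    wordLength n (w.map (affS n)).prod ≤ w.length :=
  Nat.sInf_le ⟨w, hw, rfl, rfl⟩

theorem wordLength_one (n : ℕ) : wordLength n 1 = 0 :=
  Nat.eq_zero_of_le_zero (wordLength_le (w := []) fun _ h => absurd h List.not_mem_nil)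

theorem isPeriodic_prod (hn : 2 ≤ n) (w : List ℤ) : IsPeriodic n (w.map (affS n)).prod := by
  induction w with
  | nil => exact fun _ => rfl
  | cons x w ih => simpa only [List.map_cons, List.prod_cons] using (isPeriodic_affS hn x).mul ih

theorem codeSum_prod_le (hn : 2 ≤ n) (w : List ℤ) :
    codeSum n (w.map (affS n)).prod ≤ w.length := by
  induction w using List.reverseRecOn with
  | nil => simp [codeSum_one]
  | append_singleton w x ih =>
    have := (isPeriodic_prod hn w).codeSum_mul_affS_le hn x
    simp only [List.map_append, List.prod_append, List.map_singleton, List.prod_singleton,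
      List.length_append, List.length_singleton]
    omega

namespace IsAffine

variable {π : Perm ℤ}

theorem exists_word (hn : 0 < n) (hπ : IsAffine n π) :
    ∃ w, IsWord n w ∧ (w.map (affS n)).prod = π ∧ w.length = codeSum n π := by
  induction h : codeSum n π using Nat.strong_induction_on generalizing π with
  | _ N ih =>
    by_cases hone : π = 1
    · exact ⟨[], fun _ h => absurd h List.not_mem_nil, by simp [hone],
        by simp [← h, hone, codeSum_one]⟩
    obtain ⟨i, hi, hd⟩ := hπ.exists_descent hn hone
    have hn₂ := hπ.isPeriodic.two_le_of_descent hn hd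
    have hN := hπ.isPeriodic.codeSum_mul_affS_add_one hn₂ hd
    obtain ⟨w, hw, hprod, hlen⟩ :=
      ih _ (by omega) (hπ.mul hn (isAffine_affS hn₂ i)) rfl
    refine ⟨w ++ [i], fun x hx => ?_, ?_, ?_⟩
    · rcases List.mem_append.mp hx with hx | hx
      · exact hw x hx
      · exact List.mem_singleton.mp hx ▸ mem_Icc.mp hi
    · rw [List.map_append, List.prod_append, hprod, List.map_singleton, List.prod_singleton,
        mul_affS_mul_affS]
    · rw [List.length_append, hlen, List.length_singleton, hN, h]

theorem exists_reduced_word (hn : 0 < n) (hπ : IsAffine n π) :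
    ∃ w, IsWord n w ∧ (w.map (affS n)).prod = π ∧ w.length = wordLength n π :=
  let ⟨w, hw, hprod, _⟩ := hπ.exists_word hn
  Nat.sInf_mem (s := {l | ∃ w : List ℤ, IsWord n w ∧ (w.map (affS n)).prod = π ∧ w.length = l})
    ⟨_, w, hw, hprod, rfl⟩

theorem wordLength_eq_codeSum (hn : 2 ≤ n) (hπ : IsAffine n π) :
    wordLength n π = codeSum n π := by
  obtain ⟨w, hw, hprod, hlen⟩ := hπ.exists_word (by omega)
  obtain ⟨v, -, hvprod, hvlen⟩ := hπ.exists_reduced_word (by omega)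
  apply le_antisymm
  · calc wordLength n π = wordLength n (w.map (affS n)).prod := by rw [hprod]
      _ ≤ w.length := wordLength_le hw
      _ = codeSum n π := hlen
  · calc codeSum n π = codeSum n (v.map (affS n)).prod := by rw [hvprod]
      _ ≤ v.length := codeSum_prod_le hn v
      _ = wordLength n π := hvlen

theorem wordLength_inv_le (hn : 0 < n) (hπ : IsAffine n π) :
    wordLength n π⁻¹ ≤ wordLength n π := by
  obtain ⟨w, hw, hprod, hlen⟩ := hπ.exists_reduced_word hn
  have hrev : (w.reverse.map (affS n)).prod = π⁻¹ := by
    rw [← hprod, List.prod_inv_reverse, List.map_reverse, List.map_map]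
    simp only [Function.comp_def, affS_inv]
  rw [← hlen, ← List.length_reverse, ← hrev]
  exact wordLength_le fun x hx => hw x (List.mem_reverse.mp hx)

theorem wordLength_inv (hn : 0 < n) (hπ : IsAffine n π) : wordLength n π⁻¹ = wordLength n π :=
  le_antisymm (hπ.wordLength_inv_le hn) (by simpa using (hπ.inv hn).wordLength_inv_le hn)

theorem wordLength_mul_affS (hn : 2 ≤ n) (hπ : IsAffine n π) {i : ℤ} (h : π i < π (i + 1)) :
    wordLength n (π * affS n i) = wordLength n π + 1 := by
  rw [(hπ.mul (by omega) (isAffine_affS hn i)).wordLength_eq_codeSum hn,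
    hπ.wordLength_eq_codeSum hn, hπ.isPeriodic.codeSum_mul_affS hn h]

theorem wordLength_mul_affS_add_one (hn : 2 ≤ n) (hπ : IsAffine n π) {i : ℤ}
    (h : π (i + 1) < π i) : wordLength n (π * affS n i) + 1 = wordLength n π := by
  rw [(hπ.mul (by omega) (isAffine_affS hn i)).wordLength_eq_codeSum hn,
    hπ.wordLength_eq_codeSum hn, hπ.isPeriodic.codeSum_mul_affS_add_one hn h]

variable {i : ℤ}

theorem wordLength_affS_mul (hn : 2 ≤ n) (hπ : IsAffine n π) (h : π⁻¹ i < π⁻¹ (i + 1)) :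
    wordLength n (affS n i * π) = wordLength n π + 1 := by
  have hπ' := hπ.inv (by omega)
  rw [affS_mul_eq_inv, (hπ'.mul (by omega) (isAffine_affS hn i)).wordLength_inv (by omega),
    hπ'.wordLength_mul_affS hn h, hπ.wordLength_inv (by omega)]

theorem wordLength_affS_mul_add_one (hn : 2 ≤ n) (hπ : IsAffine n π)
    (h : π⁻¹ (i + 1) < π⁻¹ i) : wordLength n (affS n i * π) + 1 = wordLength n π := by
  have hπ' := hπ.inv (by omega)
  rw [affS_mul_eq_inv, (hπ'.mul (by omega) (isAffine_affS hn i)).wordLength_inv (by omega),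
    hπ'.wordLength_mul_affS_add_one hn h, hπ.wordLength_inv (by omega)]

end IsAffine

theorem wordLength_affS (hn : 2 ≤ n) (i : ℤ) : wordLength n (affS n i) = 1 := by
  simpa [wordLength_one] using (isAffine_one n).wordLength_mul_affS hn (i := i) (by simp)

namespace IsDemazure

variable {D : Perm ℤ → Perm ℤ → Perm ℤ} {a b : Perm ℤ} {i : ℤ}

theorem isAffine_apply (hD : IsDemazure n D) (ha : IsAffine n a) (hb : IsAffine n b) :
    IsAffine n (D a b) :=
  hD.1 a b ha hb

theorem assoc (hD : IsDemazure n D) {c : Perm ℤ} (ha : IsAffine n a) (hb : IsAffine n b)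
    (hc : IsAffine n c) : D (D a b) c = D a (D b c) :=
  hD.2.1 a b c ha hb hc

theorem affS_apply_affS (hD : IsDemazure n D) (i : ℤ) : D (affS n i) (affS n i) = affS n i :=
  hD.2.2.1 i

theorem apply_eq_mul (hD : IsDemazure n D) (ha : IsAffine n a) (hb : IsAffine n b)
    (h : wordLength n (a * b) = wordLength n a + wordLength n b) : D a b = a * b :=
  hD.2.2.2 a b ha hb h

theorem apply_one_right (hD : IsDemazure n D) (ha : IsAffine n a) : D a 1 = a := by
  simpa using hD.apply_eq_mul ha (isAffine_one n) (by simp [wordLength_one])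

theorem apply_affS_of_lt (hD : IsDemazure n D) (hn : 2 ≤ n) (ha : IsAffine n a)
    (h : a i < a (i + 1)) : D a (affS n i) = a * affS n i :=
  hD.apply_eq_mul ha (isAffine_affS hn i) (by rw [ha.wordLength_mul_affS hn h, wordLength_affS hn])

theorem affS_apply_of_lt (hD : IsDemazure n D) (hn : 2 ≤ n) (ha : IsAffine n a)
    (h : a⁻¹ i < a⁻¹ (i + 1)) : D (affS n i) a = affS n i * a :=
  hD.apply_eq_mul (isAffine_affS hn i) ha (by
    rw [ha.wordLength_affS_mul hn h, wordLength_affS hn, add_comm])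

theorem apply_affS_of_gt (hD : IsDemazure n D) (hn : 2 ≤ n) (ha : IsAffine n a)
    (h : a (i + 1) < a i) : D a (affS n i) = a := by
  have hs := isAffine_affS hn i
  have has := ha.mul (by omega) hs
  have hback : D (a * affS n i) (affS n i) = a := by
    rw [hD.apply_affS_of_lt hn has (by rwa [mul_affS_apply_self hn, mul_affS_apply_succ hn]),
      mul_affS_mul_affS]
  calc D a (affS n i) = D (D (a * affS n i) (affS n i)) (affS n i) := by rw [hback]
    _ = D (a * affS n i) (D (affS n i) (affS n i)) := hD.assoc has hs hs
    _ = a := by rw [hD.affS_apply_affS, hback]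

theorem affS_apply_of_gt (hD : IsDemazure n D) (hn : 2 ≤ n) (ha : IsAffine n a)
    (h : a⁻¹ (i + 1) < a⁻¹ i) : D (affS n i) a = a := by
  have hs := isAffine_affS hn i
  have hsa := hs.mul (by omega) ha
  have hback : D (affS n i) (affS n i * a) = a := by
    rw [hD.affS_apply_of_lt hn hsa (by
      rwa [mul_inv_rev, affS_inv, mul_affS_apply_self hn, mul_affS_apply_succ hn]),
      affS_mul_affS_mul]
  calc D (affS n i) a = D (affS n i) (D (affS n i) (affS n i * a)) := by rw [hback]
    _ = D (D (affS n i) (affS n i)) (affS n i * a) := (hD.assoc hs hs hsa).symm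
    _ = a := by rw [hD.affS_apply_affS, hback]

theorem inv_apply_affS (hD : IsDemazure n D) (hn : 2 ≤ n) (ha : IsAffine n a) :
    (D a (affS n i))⁻¹ = D (affS n i) a⁻¹ := by
  have ha' := ha.inv (by omega)
  rcases lt_or_gt_of_ne (a.injective.ne (lt_add_one i).ne) with h | h
  · rw [hD.apply_affS_of_lt hn ha h, hD.affS_apply_of_lt hn ha' (by rwa [inv_inv]), mul_inv_rev,
      affS_inv]
  · rw [hD.apply_affS_of_gt hn ha h, hD.affS_apply_of_gt hn ha' (by rwa [inv_inv])]

theorem wordLength_le_apply_affS (hD : IsDemazure n D) (hn : 2 ≤ n) (ha : IsAffine n a) :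
    wordLength n a ≤ wordLength n (D a (affS n i)) := by
  rcases lt_or_gt_of_ne (a.injective.ne (lt_add_one i).ne) with h | h
  · rw [hD.apply_affS_of_lt hn ha h, ha.wordLength_mul_affS hn h]
    exact Nat.le_succ _
  · rw [hD.apply_affS_of_gt hn ha h]

theorem wordLength_le_apply (hD : IsDemazure n D) (hn : 0 < n) (ha : IsAffine n a)
    (hb : IsAffine n b) : wordLength n a ≤ wordLength n (D a b) := by
  induction h : wordLength n b using Nat.strong_induction_on generalizing b with
  | _ N ih =>
    by_cases hone : b = 1
    · rw [hone, hD.apply_one_right ha]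
    obtain ⟨i, -, hd⟩ := hb.exists_descent hn hone
    have hn₂ := hb.isPeriodic.two_le_of_descent hn hd
    have hs := isAffine_affS hn₂ i
    have hbs := hb.mul hn hs
    have hb' : D (b * affS n i) (affS n i) = b := by
      rw [hD.apply_affS_of_lt hn₂ hbs (by rwa [mul_affS_apply_self hn₂, mul_affS_apply_succ hn₂]),
        mul_affS_mul_affS]
    have hlt := hb.wordLength_mul_affS_add_one hn₂ hd
    calc wordLength n a ≤ wordLength n (D a (b * affS n i)) := ih _ (by omega) hbs rfl
      _ ≤ wordLength n (D (D a (b * affS n i)) (affS n i)) :=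
        hD.wordLength_le_apply_affS hn₂ (hD.isAffine_apply ha hbs)
      _ = wordLength n (D a b) := by rw [hD.assoc ha hbs hs, hb']

theorem apply_inv_apply_affS (hD : IsDemazure n D) (hn : 2 ≤ n) (ha : IsAffine n a) :
    D (D a (affS n i))⁻¹ (D a (affS n i)) = D (affS n i) (D (D a⁻¹ a) (affS n i)) := by
  have hs := isAffine_affS hn i
  have ha' := ha.inv (by omega)
  rw [hD.inv_apply_affS hn ha, hD.assoc hs ha' (hD.isAffine_apply ha hs), hD.assoc ha' ha hs]

end IsDemazure

section Involution

variable {z : Perm ℤ} {i : ℤ}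

theorem apply_apply_of_inv_eq (hzi : z⁻¹ = z) (k : ℤ) : z (z k) = k := by
  conv_lhs => arg 1; rw [← hzi]
  exact z.symm_apply_apply k

/-- If `z` swaps `i` and `i + 1`, it swaps every pair `k, k + 1` with `k ≡ i` and, being an
involution, maps every other residue class away from `i` and `i + 1`. -/
theorem commute_affS_of_apply_eq (hn : 2 ≤ n) (hz : IsPeriodic n z) (hzi : z⁻¹ = z)
    (hzs : z i = i + 1) : Commute z (affS n i) := by
  have hzs' : z (i + 1) = i := by rw [← hzs, apply_apply_of_inv_eq hzi]
  refine Equiv.ext fun k => ?_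
  simp only [Perm.mul_apply]
  by_cases h₁ : (n : ℤ) ∣ k - i
  · have h₁' : (n : ℤ) ∣ k + 1 - (i + 1) := by rwa [add_sub_add_right_eq_sub]
    have hzk : z k = k + 1 := by rw [hz.apply_of_dvd h₁, hzs]; ring
    have hzk' : z (k + 1) = k := by rw [hz.apply_of_dvd h₁', hzs']; ring
    rw [affS_apply_of_dvd hn h₁, hzk', hzk, affS_apply_of_dvd_succ hn h₁', add_sub_cancel_right]
  by_cases h₂ : (n : ℤ) ∣ k - (i + 1)
  · have h₂' : (n : ℤ) ∣ k - 1 - i := by rwa [sub_sub, add_comm 1 i]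
    have hzk : z k = k - 1 := by rw [hz.apply_of_dvd h₂, hzs']; ring
    have hzk' : z (k - 1) = k := by rw [hz.apply_of_dvd h₂', hzs]; ring
    rw [affS_apply_of_dvd_succ hn h₂, hzk', hzk, affS_apply_of_dvd hn h₂', sub_add_cancel]
  have hback : ∀ c, (n : ℤ) ∣ z k - c → (n : ℤ) ∣ k - z c := fun c h => by
    simpa only [apply_apply_of_inv_eq hzi] using hz.dvd_apply_sub h
  rw [affS_apply_of_not_dvd hn h₁ h₂, affS_apply_of_not_dvd hn (fun h => h₂ (hzs ▸ hback i h))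
    (fun h => h₁ (hzs' ▸ hback (i + 1) h))]

theorem affS_mul_apply_succ_lt (hn : 2 ≤ n) (hz : IsPeriodic n z) (hzi : z⁻¹ = z)
    (hd : z (i + 1) < z i) (hzs : z i ≠ i + 1) :
    (affS n i * z) (i + 1) < (affS n i * z) i := by
  refine affS_lt_affS hn i hd fun ⟨hdvd, heq⟩ => hzs ?_
  have := hz.apply_of_dvd hdvd
  rw [apply_apply_of_inv_eq hzi] at this
  omega

/-- The involution `y` is `z s_i` if `z` commutes with `s_i`, and `s_i z s_i` otherwise. -/
theorem IsDemazure.exists_inv_eq_wordLength_lt {D : Perm ℤ → Perm ℤ → Perm ℤ}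
    (hD : IsDemazure n D) (hn : 2 ≤ n) (hz : IsAffine n z) (hzi : z⁻¹ = z)
    (hd : z (i + 1) < z i) :
    ∃ y, IsAffine n y ∧ y⁻¹ = y ∧ wordLength n y < wordLength n z ∧
      D (affS n i) (D y (affS n i)) = z := by
  have hs := isAffine_affS hn i
  have hzs := hz.mul (by omega) hs
  have hd' : z⁻¹ (i + 1) < z⁻¹ i := by rwa [hzi]
  by_cases hswap : z i = i + 1
  · have hcomm := commute_affS_of_apply_eq hn hz.isPeriodic hzi hswap
    refine ⟨z * affS n i, hzs, by rw [mul_inv_rev, affS_inv, hzi, hcomm.eq], ?_, ?_⟩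
    · have := hz.wordLength_mul_affS_add_one hn hd
      omega
    · rw [hD.apply_affS_of_lt hn hzs (by rwa [mul_affS_apply_self hn, mul_affS_apply_succ hn]),
        mul_affS_mul_affS, hD.affS_apply_of_gt hn hz hd']
  · have hsz := hs.mul (by omega) hz
    have hsd := affS_mul_apply_succ_lt hn hz.isPeriodic hzi hd hswap
    have hy := hsz.mul (by omega) hs
    refine ⟨affS n i * z * affS n i, hy, by rw [mul_inv_rev, mul_inv_rev, affS_inv, hzi,
      mul_assoc], ?_, ?_⟩
    · have := hsz.wordLength_mul_affS_add_one hn hsd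
      have := hz.wordLength_affS_mul_add_one hn hd'
      omega
    · rw [hD.apply_affS_of_lt hn hy (by rwa [mul_affS_apply_self hn, mul_affS_apply_succ hn]),
        mul_affS_mul_affS, hD.affS_apply_of_lt hn hsz (by
          rwa [mul_inv_rev, affS_inv, hzi, mul_affS_apply_self hn, mul_affS_apply_succ hn]),
        affS_mul_affS_mul]

theorem IsDemazure.exists_apply_inv_self_eq {D : Perm ℤ → Perm ℤ → Perm ℤ}
    (hD : IsDemazure n D) (hn : 0 < n) (hz : IsAffine n z) (hzi : z⁻¹ = z) :
    ∃ π, IsAffine n π ∧ D π⁻¹ π = z := by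
  induction h : wordLength n z using Nat.strong_induction_on generalizing z with
  | _ N ih =>
    by_cases hone : z = 1
    · exact ⟨1, isAffine_one n, by rw [inv_one, hD.apply_one_right (isAffine_one n), hone]⟩
    obtain ⟨i, -, hd⟩ := hz.exists_descent hn hone
    have hn₂ := hz.isPeriodic.two_le_of_descent hn hd
    obtain ⟨y, hy, hyi, hlt, hyz⟩ := hD.exists_inv_eq_wordLength_lt hn₂ hz hzi hd
    obtain ⟨π, hπ, hπy⟩ := ih _ (h ▸ hlt) hy hyi rfl
    exact ⟨D π (affS n i), hD.isAffine_apply hπ (isAffine_affS hn₂ i),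
      by rw [hD.apply_inv_apply_affS hn₂ hπ, hπy, hyz]⟩

end Involution

theorem finite_setOf_wordLength_le (hn : 0 < n) (L : ℕ) :
    {π | IsAffine n π ∧ wordLength n π ≤ L}.Finite := by
  let letter : Icc (1 : ℤ) n → Perm ℤ := fun x => affS n x
  refine ((List.finite_length_le _ L).image fun w => (w.map letter).prod).subset ?_
  rintro π ⟨hπ, hL⟩
  obtain ⟨w, hw, hprod, hlen⟩ := hπ.exists_reduced_word hn
  refine ⟨w.attach.map fun x => ⟨x.1, mem_Icc.mpr (hw x.1 x.2)⟩, by simpa [hlen] using hL, ?_⟩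
  simp only [List.map_map]
  rw [← hprod, ← List.attach_map_val (l := w)]
  rfl

/-- every affine involution has the form `π⁻¹ ∘ π`, so the set of
Hecke atoms of any affine involution is nonempty, and it is finite. -/
theorem hecke_atoms_nonempty_finite (n : ℕ) (hn : 0 < n)
    (D : Equiv.Perm ℤ → Equiv.Perm ℤ → Equiv.Perm ℤ) (hD : IsDemazure n D)
    (z : Equiv.Perm ℤ) (hz : IsAffine n z) (hzi : z⁻¹ = z) :
    (AHecke n D z).Nonempty ∧ (AHecke n D z).Finite := by
  refine ⟨hD.exists_apply_inv_self_eq hn hz hzi, ?_⟩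
  refine (finite_setOf_wordLength_le hn (wordLength n z)).subset fun π ⟨hπ, hπz⟩ => ⟨hπ, ?_⟩
  calc wordLength n π = wordLength n π⁻¹ := (hπ.wordLength_inv hn).symm
    _ ≤ wordLength n (D π⁻¹ π) := hD.wordLength_le_apply hn (hπ.inv hn) hπ
    _ = wordLength n z := by rw [hπz]
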